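/- arXiv:1903.10272 — 3 statements merged into one kernel-verified Lean document; each statement's English description precedes it below -/
import Mathlib

section
/- Let Q be a real n×n matrix and Q⁺, Q⁻ its entrywise positive and negative parts. Under the standard immersion sti, the operator of multiplication by Q on Kaucher interval vectors corresponds to multiplication by the block matrix Q̃ = [[Q⁺, Q⁻],[Q⁻, Q⁺]] on ℝ^{2n}: for every interval vector x in KR^n, sti(Q·x) = Q̃ · sti(x), where (Q·x)_i = Σ_j q_{ij}·x_j with scalar-interval multiplication q·[u,v] = [qu, qv] if q ≥ 0, [qv, qu] otherwise. -/
/-- Multiplication of a Kaucher interval by a real scalar. -/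
noncomputable def ksmul (q : ℝ) (x : ℝ × ℝ) : ℝ × ℝ :=
  if 0 ≤ q then (q * x.1, q * x.2) else (q * x.2, q * x.1)

/-- Multiplication of a point matrix `Q` by a Kaucher interval vector:
`(Q·x)_i = Σ_j q_{ij}·x_j`. -/
noncomputable def kmatMul {n : ℕ} (Q : Matrix (Fin n) (Fin n) ℝ)
    (x : Fin n → ℝ × ℝ) : Fin n → ℝ × ℝ :=
  fun i => ∑ j, ksmul (Q i j) (x j)

/-- The standard immersion `sti : KR^n → ℝ^{2n}`. -/
def sti {n : ℕ} (x : Fin n → ℝ × ℝ) : (Fin n ⊕ Fin n) → ℝ :=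
  Sum.elim (fun i => -(x i).1) (fun i => (x i).2)

/-- The extended multiplier matrix `Q̃ = [[Q⁺, Q⁻],[Q⁻, Q⁺]]`. -/
def extMul {n : ℕ} (Q : Matrix (Fin n) (Fin n) ℝ) :
    Matrix (Fin n ⊕ Fin n) (Fin n ⊕ Fin n) ℝ :=
  Matrix.fromBlocks (fun i j => max (Q i j) 0) (fun i j => max (-(Q i j)) 0)
    (fun i j => max (-(Q i j)) 0) (fun i j => max (Q i j) 0)

/-- Under the standard immersion, multiplication by a point matrix `Q` on Kaucher
interval vectors corresponds to multiplication by the extended multiplier matrix. -/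
theorem sti_kmatMul (n : ℕ) (Q : Matrix (Fin n) (Fin n) ℝ) (x : Fin n → ℝ × ℝ) :
    sti (kmatMul Q x) = (extMul Q).mulVec (sti x) := by
  funext k
  cases k with
  | inl i =>
    simp only [sti, kmatMul, Matrix.mulVec, dotProduct, extMul, Sum.elim_inl,
      Fintype.sum_sum_type, Matrix.fromBlocks_apply₁₁, Matrix.fromBlocks_apply₁₂,
      Prod.fst_sum, ← Finset.sum_add_distrib, ← Finset.sum_neg_distrib]
    refine Finset.sum_congr rfl fun j _ => ?_
    unfold ksmul
    rcases le_or_gt 0 (Q i j) with h | h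
    · simp [Matrix.fromBlocks, if_pos h, max_eq_left h, max_eq_right (by linarith : -(Q i j) ≤ 0)]
      try ring
    · simp [Matrix.fromBlocks, if_neg (not_le.2 h), max_eq_right h.le, max_eq_left (by linarith : 0 ≤ -(Q i j))]
      try ring
  | inr i =>
    simp only [sti, kmatMul, Matrix.mulVec, dotProduct, extMul, Sum.elim_inr,
      Fintype.sum_sum_type, Matrix.fromBlocks_apply₂₁, Matrix.fromBlocks_apply₂₂,
      Prod.snd_sum, ← Finset.sum_add_distrib]
    refine Finset.sum_congr rfl fun j _ => ?_
    unfold ksmul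
    rcases le_or_gt 0 (Q i j) with h | h
    · simp [Matrix.fromBlocks, if_pos h, max_eq_left h, max_eq_right (by linarith : -(Q i j) ≤ 0)]
    · simp [Matrix.fromBlocks, if_neg (not_le.2 h), max_eq_right h.le, max_eq_left (by linarith : 0 ≤ -(Q i j))]
      try ring
end

section
/- For a real n×n matrix Q, multiplication by Q on Kaucher interval vectors annihilates only the zero vector (i.e., Q·x = 0 in KR^n implies x = 0) if and only if both Q and |Q| are nonsingular. -/
/-- The matrix of absolute values of the entries of `Q`. -/
def absMat {n : ℕ} (Q : Matrix (Fin n) (Fin n) ℝ) : Matrix (Fin n) (Fin n) ℝ :=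
  fun i j => |Q i j|

lemma ksmul_sum (q : ℝ) (y : ℝ × ℝ) :
    (ksmul q y).1 + (ksmul q y).2 = q * (y.1 + y.2) := by
  unfold ksmul; split <;> ring

lemma ksmul_diff (q : ℝ) (y : ℝ × ℝ) :
    (ksmul q y).2 - (ksmul q y).1 = |q| * (y.2 - y.1) := by
  unfold ksmul
  split
  · rw [abs_of_nonneg ‹_›]; ring
  · rw [abs_of_neg (lt_of_not_ge ‹_›)]; ring

lemma kmatMul_sum {n : ℕ} (Q : Matrix (Fin n) (Fin n) ℝ) (x : Fin n → ℝ × ℝ)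
    (i : Fin n) :
    (kmatMul Q x i).1 + (kmatMul Q x i).2
      = Q.mulVec (fun j => (x j).1 + (x j).2) i := by
  simp only [kmatMul, Matrix.mulVec, dotProduct, Prod.fst_sum, Prod.snd_sum,
    ← Finset.sum_add_distrib]
  exact Finset.sum_congr rfl fun j _ => ksmul_sum _ _

lemma kmatMul_diff {n : ℕ} (Q : Matrix (Fin n) (Fin n) ℝ) (x : Fin n → ℝ × ℝ)
    (i : Fin n) :
    (kmatMul Q x i).2 - (kmatMul Q x i).1
      = (absMat Q).mulVec (fun j => (x j).2 - (x j).1) i := by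
  simp only [kmatMul, Matrix.mulVec, dotProduct, Prod.fst_sum, Prod.snd_sum,
    ← Finset.sum_sub_distrib, absMat]
  exact Finset.sum_congr rfl fun j _ => ksmul_diff _ _

lemma ksmul_zero (q : ℝ) : ksmul q 0 = 0 := by
  unfold ksmul; split <;> simp

/-- Multiplication by `Q` on Kaucher interval vectors annihilates only the zero
vector iff both `Q` and `|Q|` are nonsingular (i.e. `Q` is absolutely regular). -/
theorem kmatMul_injective_at_zero_iff (n : ℕ) (Q : Matrix (Fin n) (Fin n) ℝ) :
    (∀ x : Fin n → ℝ × ℝ, kmatMul Q x = 0 ↔ x = 0) ↔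
      Q.det ≠ 0 ∧ (absMat Q).det ≠ 0 := by
  constructor
  · intro h
    constructor
    · intro hd
      obtain ⟨v, hv, hvz⟩ := (Matrix.exists_mulVec_eq_zero_iff).2 hd
      apply hv
      have : (fun j => ((v j, v j) : ℝ × ℝ)) = 0 := by
        rw [← h]
        funext i
        have h1 := kmatMul_sum Q (fun j => (v j, v j)) i
        have h2 := kmatMul_diff Q (fun j => (v j, v j)) i
        simp only [Pi.zero_apply]
        have hQ : Q.mulVec (fun j => v j + v j) i = 0 := by
          have : (fun j => v j + v j) = (2 : ℝ) • v := by
            funext j; simp only [Pi.smul_apply, smul_eq_mul]; ring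
          rw [this, Matrix.mulVec_smul, hvz]; simp
        have habs : (absMat Q).mulVec (fun j => v j - v j) i = 0 := by
          simp [Matrix.mulVec, dotProduct]
        rw [hQ] at h1
        rw [habs] at h2
        have e1 : (kmatMul Q (fun j => (v j, v j)) i).1 = 0 := by linarith
        have e2 : (kmatMul Q (fun j => (v j, v j)) i).2 = 0 := by linarith
        exact Prod.ext e1 e2
      funext j
      have := congrFun this j
      simpa using congrArg Prod.fst this
    · intro hd
      obtain ⟨v, hv, hvz⟩ := (Matrix.exists_mulVec_eq_zero_iff).2 hd
      apply hv
      have : (fun j => ((-v j, v j) : ℝ × ℝ)) = 0 := by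
        rw [← h]
        funext i
        have h1 := kmatMul_sum Q (fun j => (-v j, v j)) i
        have h2 := kmatMul_diff Q (fun j => (-v j, v j)) i
        simp only [Pi.zero_apply]
        have hQ : Q.mulVec (fun j => -v j + v j) i = 0 := by
          simp [Matrix.mulVec, dotProduct]
        have habs : (absMat Q).mulVec (fun j => v j - -v j) i = 0 := by
          have : (fun j => v j - -v j) = (2 : ℝ) • v := by
            funext j; simp only [Pi.smul_apply, smul_eq_mul]; ring
          rw [this, Matrix.mulVec_smul, hvz]; simp
        rw [hQ] at h1
        rw [habs] at h2
        have e1 : (kmatMul Q (fun j => (-v j, v j)) i).1 = 0 := by linarith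
        have e2 : (kmatMul Q (fun j => (-v j, v j)) i).2 = 0 := by linarith
        exact Prod.ext e1 e2
      funext j
      have := congrFun this j
      simpa using congrArg Prod.snd this
  · rintro ⟨hQ, hA⟩ x
    constructor
    · intro hx
      have hs : Q.mulVec (fun j => (x j).1 + (x j).2) = 0 := by
        funext i
        rw [← kmatMul_sum]
        simp [congrFun hx i]
      have hdv : (absMat Q).mulVec (fun j => (x j).2 - (x j).1) = 0 := by
        funext i
        rw [← kmatMul_diff]
        simp [congrFun hx i]
      have hs0 : (fun j => (x j).1 + (x j).2) = 0 := by
        by_contra hne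
        exact hQ (Matrix.exists_mulVec_eq_zero_iff.1 ⟨_, hne, hs⟩)
      have hd0 : (fun j => (x j).2 - (x j).1) = 0 := by
        by_contra hne
        exact hA (Matrix.exists_mulVec_eq_zero_iff.1 ⟨_, hne, hdv⟩)
      funext j
      have e1 := congrFun hs0 j
      have e2 := congrFun hd0 j
      simp only [Pi.zero_apply] at e1 e2
      have : (x j).1 = 0 := by linarith
      have : (x j).2 = 0 := by linarith
      exact Prod.ext ‹(x j).1 = 0› ‹(x j).2 = 0›
    · rintro rfl
      funext i
      simp [kmatMul, ksmul_zero]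
end

section
/- The 2×2 real matrix [[1,1],[−1,1]] is invertible, yet its extended multiplier matrix (the 4×4 matrix with rows (1,1,0,0),(0,1,1,0),(0,0,1,1),(1,0,0,1)) is singular; equivalently, the matrix of absolute values [[1,1],[1,1]] is singular. Consequently, multiplication by [[1,1],[−1,1]] on KR² has a nontrivial kernel: it maps the nonzero interval vector ([−1,1],[1,−1]) to zero. -/
/-- The matrix `[[1,1],[−1,1]]` is invertible, but its extended multiplier matrix and
its matrix of absolute values are singular; consequently multiplication by it on `KR²`
kills the nonzero interval vector `([−1,1],[1,−1])`. -/
theorem regular_but_not_absolutely_regular :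
    (Matrix.of ![![(1 : ℝ), 1], ![-1, 1]]).det ≠ 0 ∧
    (extMul (Matrix.of ![![(1 : ℝ), 1], ![-1, 1]])).det = 0 ∧
    (Matrix.of ![![(1 : ℝ), 1], ![1, 1]]).det = 0 ∧
    kmatMul (Matrix.of ![![(1 : ℝ), 1], ![-1, 1]])
        ![((-1 : ℝ), (1 : ℝ)), ((1 : ℝ), (-1 : ℝ))] = 0 ∧
    (![((-1 : ℝ), (1 : ℝ)), ((1 : ℝ), (-1 : ℝ))] : Fin 2 → ℝ × ℝ) ≠ 0 := by
  refine ⟨?_, ?_, ?_, ?_, ?_⟩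
  · norm_num [Matrix.det_fin_two]
  · rw [← Matrix.exists_mulVec_eq_zero_iff]
    refine ⟨Sum.elim ![1, -1] ![1, -1], ?_, ?_⟩
    · intro h
      have := congrFun h (Sum.inl 0)
      simp at this
    · funext i
      rcases i with i | i <;> fin_cases i <;>
        simp [extMul, Matrix.mulVec, Matrix.fromBlocks, dotProduct,
          Fin.sum_univ_two, Fintype.sum_sum_type] <;> norm_num
  · simp [Matrix.det_fin_two]
  · funext i
    fin_cases i <;>
      simp [kmatMul, ksmul, Fin.sum_univ_two, Prod.ext_iff] <;> norm_num
  · intro h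
    have := congrFun h 0
    simp [Prod.ext_iff] at this
end
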